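/- Under the nonlinear fixed-point iteration setup, there exist constants K₃ > 0 and K₃′ > 0 depending only on a and L (independent of n, k, and x₀) such that for all n ≥ 0 and k ≥ 1, the N×k matrices Ǔ with columns ǔ_{n+j} = u_{n+j} − F̃ʲ(F̃ − I)ε_n and W̌ with columns w̌_{n+j} = w_{n+j} − F̃ʲ(F̃ − I)²ε_n, j = 0,…,k−1, satisfy ‖Ǔ‖ ≤ K₃‖ε_n‖² and ‖W̌‖ ≤ K₃′‖ε_n‖². -/

import Mathlib

/-!
Write `εₘ = xₘ - s` and `Dⱼ = ε_{n+j} - F̃ʲ εₙ`. Then `D_{j+1} = (ε_{n+j+1} - F̃ ε_{n+j}) + F̃ Dⱼ`,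
where the first term is at most `a L^{2j} ‖εₙ‖²`, so `‖Dⱼ‖ ≤ C Lʲ ‖εₙ‖²` with `C = a / ((1 - L) L)`.
The columns `ǔ_{n+j}` and `w̌_{n+j}` are the first and second differences of `Dⱼ` in `j`, hence
again `O(Lʲ ‖εₙ‖²)`, and the operator norm of a matrix is at most the sum of the norms of its
columns, a geometric series.
-/

open scoped Matrix Matrix.Norms.L2Operator

namespace Matrix

variable {𝕜 m n : Type*} [RCLike 𝕜] [Fintype m] [Fintype n] [DecidableEq n]

lemma l2_opNorm_of_cols_le_sum_norm (c : n → EuclideanSpace 𝕜 m) :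
    ‖(of fun i j => c j i : Matrix m n 𝕜)‖ ≤ ∑ j, ‖c j‖ := by
  refine ContinuousLinearMap.opNorm_le_bound _ (by positivity) fun v => ?_
  have hcols : (toEuclideanLin (of fun i j => c j i : Matrix m n 𝕜)) v = ∑ j, v j • c j := by
    ext i
    simp [toLpLin_apply, mulVec, dotProduct, mul_comm]
  calc ‖(toEuclideanLin (of fun i j => c j i : Matrix m n 𝕜)) v‖
      = ‖∑ j, v j • c j‖ := by rw [hcols]
    _ ≤ ∑ j, ‖v j‖ * ‖c j‖ := (norm_sum_le _ _).trans_eq (by simp only [norm_smul])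
    _ ≤ ∑ j, ‖v‖ * ‖c j‖ := by gcongr with j; exact PiLp.norm_apply_le v j
    _ = (∑ j, ‖c j‖) * ‖v‖ := by rw [← Finset.mul_sum, mul_comm]

lemma l2_opNorm_of_cols_le_geom {k : ℕ} {c : Fin k → EuclideanSpace 𝕜 m} {b L : ℝ}
    (hb : 0 ≤ b) (hL0 : 0 ≤ L) (hL1 : L < 1) (hc : ∀ j, ‖c j‖ ≤ b * L ^ (j : ℕ)) :
    ‖(of fun i j => c j i : Matrix m (Fin k) 𝕜)‖ ≤ b / (1 - L) :=
  calc ‖(of fun i j => c j i : Matrix m (Fin k) 𝕜)‖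
      ≤ ∑ j, ‖c j‖ := l2_opNorm_of_cols_le_sum_norm c
    _ ≤ ∑ j : Fin k, b * L ^ (j : ℕ) := Finset.sum_le_sum fun j _ => hc j
    _ = b * ∑ j ∈ Finset.Ico 0 k, L ^ j := by
      rw [Fin.sum_univ_eq_sum_range (fun j => b * L ^ j), ← Finset.mul_sum, Finset.range_eq_Ico]
    _ ≤ b * (L ^ 0 / (1 - L)) := by gcongr; exact geom_sum_Ico_le_of_lt_one hL0 hL1
    _ = b / (1 - L) := by ring

end Matrix

section FixedPoint

variable {E : Type*} [SeminormedAddCommGroup E] {f : E → E} {s : E} {δ L : ℝ}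

lemma norm_apply_sub_fixedPoint_le (hfs : f s = s)
    (hLip : ∀ x y, ‖x - s‖ ≤ δ → ‖y - s‖ ≤ δ → ‖f x - f y‖ ≤ L * ‖x - y‖)
    {y : E} (hy : ‖y - s‖ ≤ δ) : ‖f y - s‖ ≤ L * ‖y - s‖ := by
  simpa [hfs] using hLip y s hy (by simpa using (norm_nonneg _).trans hy)

lemma norm_iterate_sub_fixedPoint_le (hL1 : L ≤ 1) (hfs : f s = s)
    (hLip : ∀ x y, ‖x - s‖ ≤ δ → ‖y - s‖ ≤ δ → ‖f x - f y‖ ≤ L * ‖x - y‖)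
    {x : ℕ → E} (hx0 : ‖x 0 - s‖ ≤ δ) (hx : ∀ m, x (m + 1) = f (x m)) (m : ℕ) :
    ‖x m - s‖ ≤ δ := by
  induction m with
  | zero => exact hx0
  | succ m ih =>
    rw [hx m]
    calc ‖f (x m) - s‖ ≤ L * ‖x m - s‖ := norm_apply_sub_fixedPoint_le hfs hLip ih
      _ ≤ 1 * δ := mul_le_mul hL1 ih (norm_nonneg _) zero_le_one
      _ = δ := one_mul δ

end FixedPoint

section Linearization

variable {𝕜 E : Type*} [NontriviallyNormedField 𝕜] [SeminormedAddCommGroup E] [NormedSpace 𝕜 E]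
  {L : ℝ}

theorem norm_sub_pow_apply_le_of_quadratic {F : E →L[𝕜] E} {a : ℝ} (ha : 0 ≤ a) (hL0 : 0 < L)
    (hL1 : L < 1) (hF : ‖F‖ ≤ L) {e : ℕ → E} (hcontr : ∀ m, ‖e (m + 1)‖ ≤ L * ‖e m‖)
    (hquad : ∀ m, ‖e (m + 1) - F (e m)‖ ≤ a * ‖e m‖ ^ 2) (j : ℕ) :
    ‖e j - (F ^ j) (e 0)‖ ≤ a / ((1 - L) * L) * L ^ j * (1 - L ^ j) * ‖e 0‖ ^ 2 := by
  induction j with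
  | zero => simp
  | succ j ih =>
    have hej : ‖e j‖ ≤ L ^ j * ‖e 0‖ := le_geom (u := fun m => ‖e m‖) hL0.le j fun m _ => hcontr m
    have hsplit : e (j + 1) - (F ^ (j + 1)) (e 0)
        = (e (j + 1) - F (e j)) + F (e j - (F ^ j) (e 0)) := by
      rw [pow_succ', mul_apply_eq_comp, map_sub]
      abel
    -- `a / ((1 - L) * L)` is the constant for which the bound satisfies this recursion with equality
    have hconst : a * (L ^ j * ‖e 0‖) ^ 2 + L * (a / ((1 - L) * L) * L ^ j * (1 - L ^ j) * ‖e 0‖ ^ 2)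
        = a / ((1 - L) * L) * L ^ (j + 1) * (1 - L ^ (j + 1)) * ‖e 0‖ ^ 2 := by
      have : 1 - L ≠ 0 := by linarith
      field_simp
      ring
    calc ‖e (j + 1) - (F ^ (j + 1)) (e 0)‖
        ≤ ‖e (j + 1) - F (e j)‖ + ‖F‖ * ‖e j - (F ^ j) (e 0)‖ := by
          rw [hsplit]; exact (norm_add_le _ _).trans (by gcongr; exact F.le_opNorm _)
      _ ≤ a * (L ^ j * ‖e 0‖) ^ 2 + L * (a / ((1 - L) * L) * L ^ j * (1 - L ^ j) * ‖e 0‖ ^ 2) := by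
          gcongr
          exact (hquad j).trans (by gcongr)
      _ = _ := hconst

theorem norm_sub_sub_pow_apply_sub_one_le {T : E →L[𝕜] E} {g : ℕ → E} {v : E} {c : ℝ}
    (hL0 : 0 ≤ L) (hL1 : L ≤ 1) (hg : ∀ j, ‖g j - (T ^ j) v‖ ≤ c * L ^ j) (j : ℕ) :
    ‖(g (j + 1) - g j) - (T ^ j) ((T - 1) v)‖ ≤ 2 * c * L ^ j := by
  have hsplit : (g (j + 1) - g j) - (T ^ j) ((T - 1) v)
      = (g (j + 1) - (T ^ (j + 1)) v) - (g j - (T ^ j) v) := by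
    rw [pow_succ, mul_apply_eq_comp, sub_apply, map_sub, one_apply_eq_self]
    abel
  have hc : 0 ≤ c := by simpa using (norm_nonneg _).trans (hg 0)
  calc ‖(g (j + 1) - g j) - (T ^ j) ((T - 1) v)‖
      ≤ ‖g (j + 1) - (T ^ (j + 1)) v‖ + ‖g j - (T ^ j) v‖ := hsplit ▸ norm_sub_le _ _
    _ ≤ c * L ^ (j + 1) + c * L ^ j := add_le_add (hg _) (hg _)
    _ ≤ c * L ^ j + c * L ^ j := by gcongr c * ?_ + _; exact pow_le_pow_of_le_one hL0 hL1 j.le_succ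
    _ = 2 * c * L ^ j := by ring

end Linearization

/-- Under the nonlinear fixed-point iteration setup, there are constants
`K₃, K₃′ > 0` depending only on `a` and `L` such that for all `n ≥ 0` and `k ≥ 1`
the `N×k` matrices `Ǔ` (columns `ǔ_{n+j} = u_{n+j} − F̃ʲ(F̃−I)ε_n`) and `W̌`
(columns `w̌_{n+j} = w_{n+j} − F̃ʲ(F̃−I)²ε_n`) satisfy `‖Ǔ‖ ≤ K₃‖ε_n‖²` and
`‖W̌‖ ≤ K₃′‖ε_n‖²`. -/
theorem rre_correction_matrix_norm_bound (L a : ℝ) (hL0 : 0 < L) (hL1 : L < 1) (ha : 0 < a) :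
    ∃ K₃ K₃' : ℝ, 0 < K₃ ∧ 0 < K₃' ∧
      ∀ (N : ℕ), 1 ≤ N → ∀ (s : EuclideanSpace ℂ (Fin N)) (δ : ℝ), 0 < δ →
      ∀ (f : EuclideanSpace ℂ (Fin N) → EuclideanSpace ℂ (Fin N)), f s = s →
      (∀ x y : EuclideanSpace ℂ (Fin N),
        ‖x - s‖ ≤ δ → ‖y - s‖ ≤ δ → ‖f x - f y‖ ≤ L * ‖x - y‖) →
      ∀ (F : EuclideanSpace ℂ (Fin N) →L[ℂ] EuclideanSpace ℂ (Fin N)), ‖F‖ ≤ L →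
      (∀ x : EuclideanSpace ℂ (Fin N),
        ‖x - s‖ ≤ δ → ‖f x - s - F (x - s)‖ ≤ a * ‖x - s‖ ^ 2) →
      ∀ (x : ℕ → EuclideanSpace ℂ (Fin N)), ‖x 0 - s‖ ≤ δ →
      (∀ m, x (m + 1) = f (x m)) →
      ∀ n k : ℕ, 1 ≤ k →
        ‖(Matrix.of fun (p : Fin N) (j : Fin k) =>
            ((x (n + (j : ℕ) + 1) - x (n + (j : ℕ)))
              - (F ^ (j : ℕ) * (F - 1)) (x n - s)) p)‖ ≤ K₃ * ‖x n - s‖ ^ 2 ∧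
        ‖(Matrix.of fun (p : Fin N) (j : Fin k) =>
            (((x (n + (j : ℕ) + 2) - x (n + (j : ℕ) + 1))
                - (x (n + (j : ℕ) + 1) - x (n + (j : ℕ))))
              - ((F ^ (j : ℕ) * (F - 1) ^ 2 : EuclideanSpace ℂ (Fin N) →L[ℂ] EuclideanSpace ℂ (Fin N))) (x n - s)) p)‖ ≤ K₃' * ‖x n - s‖ ^ 2 := by
  have h1L : 0 < 1 - L := by linarith
  set C := a / ((1 - L) * L)
  have hC : 0 < C := by positivity
  refine ⟨2 * C / (1 - L), 4 * C / (1 - L), by positivity, by positivity, ?_⟩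
  intro N _ s δ _ f hfs hLip F hF hquad x hx0 hx n k _
  have hball := norm_iterate_sub_fixedPoint_le hL1.le hfs hLip hx0 hx
  set e : ℕ → EuclideanSpace ℂ (Fin N) := fun m => x (n + m) - s
  have he (m : ℕ) : e (m + 1) = f (x (n + m)) - s := by
    show x (n + m + 1) - s = _
    rw [hx]
  have hlin (j : ℕ) : ‖e j - (F ^ j) (e 0)‖ ≤ C * ‖e 0‖ ^ 2 * L ^ j :=
    calc ‖e j - (F ^ j) (e 0)‖ ≤ C * L ^ j * (1 - L ^ j) * ‖e 0‖ ^ 2 :=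
          norm_sub_pow_apply_le_of_quadratic ha.le hL0 hL1 hF
            (fun m => he m ▸ norm_apply_sub_fixedPoint_le hfs hLip (hball _))
            (fun m => he m ▸ hquad _ (hball _)) j
      _ ≤ C * L ^ j * 1 * ‖e 0‖ ^ 2 := by gcongr; linarith [pow_nonneg hL0.le j]
      _ = C * ‖e 0‖ ^ 2 * L ^ j := by ring
  have hU := norm_sub_sub_pow_apply_sub_one_le hL0.le hL1.le hlin
  have hW := norm_sub_sub_pow_apply_sub_one_le hL0.le hL1.le hU
  constructor
  · refine (Matrix.l2_opNorm_of_cols_le_geom (b := 2 * (C * ‖x n - s‖ ^ 2)) (by positivity)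
      hL0.le hL1 fun j => ?_).trans_eq (by ring)
    simpa only [e, sub_sub_sub_cancel_right, mul_apply_eq_comp, add_zero, add_assoc] using hU j
  · refine (Matrix.l2_opNorm_of_cols_le_geom (b := 2 * (2 * (C * ‖x n - s‖ ^ 2))) (by positivity)
      hL0.le hL1 fun j => ?_).trans_eq (by ring)
    simpa only [e, sub_sub_sub_cancel_right, mul_apply_eq_comp, add_zero, add_assoc, sq,
      Nat.reduceAdd] using hW j
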